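/- Let L be an almost-algebraic finite-dimensional Lie algebra over a field of characteristic zero such that every almost-algebraic subalgebra of L is φ-free. Then L is elementary, i.e., every subalgebra of L has trivial Frattini ideal. -/

import Mathlib

/-- The Frattini ideal of a Lie algebra: the largest ideal contained in every
maximal (proper) subalgebra. -/
def frattiniIdeal (F L : Type*) [Field F] [LieRing L] [LieAlgebra F L] : LieIdeal F L :=
  sSup {I : LieIdeal F L | ∀ M : LieSubalgebra F L, IsCoatom M → ∀ x ∈ I, x ∈ M}

/-- A Lie algebra is φ-free if its Frattini ideal is trivial. -/
def IsPhiFree (F L : Type*) [Field F] [LieRing L] [LieAlgebra F L] : Prop :=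
  frattiniIdeal F L = ⊥

/-- A Lie algebra is elementary if every subalgebra has trivial Frattini ideal. -/
def IsElementary (F L : Type*) [Field F] [LieRing L] [LieAlgebra F L] : Prop :=
  ∀ B : LieSubalgebra F L, frattiniIdeal F B = ⊥

/-- A Lie algebra is almost algebraic if ad L contains the semisimple and nilpotent
Jordan components of each of its elements. -/
def IsAlmostAlgebraic (F L : Type*) [Field F] [LieRing L] [LieAlgebra F L] : Prop :=
  ∀ x : L, ∀ s n : Module.End F L, s.IsSemisimple → IsNilpotent n → Commute s n →
    LieAlgebra.ad F L x = s + n →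
    (∃ y : L, LieAlgebra.ad F L y = s) ∧ (∃ z : L, LieAlgebra.ad F L z = n)

/-!
Let `B ≤ L`, let `H ⊆ L` be the image of `φ(B)` and `A = N_L(H)` its normalizer, so `B ≤ A`.
The Jordan components of `ad x` are polynomials in `ad x`, hence preserve `H` whenever `ad x`
does; so `A` contains the components of its elements, and by uniqueness of the Jordan
decomposition they restrict to the components of `ad_A x`. Thus `A` is almost algebraic, hence
φ-free. Now `φ(B)` is an ideal of `A` lying in `B`, and a maximal subalgebra `M` of `A` missing it
would give `A = φ(B) + M`, hence `B = φ(B) + (B ∩ M)` with `B ∩ M` proper, which is impossible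
as `φ(B)` lies in every maximal subalgebra of `B`. So `φ(B) ⊆ φ(A) = 0`.
-/

open LieAlgebra Polynomial

theorem LieIdeal.toSubmodule_sup_eq_top_of_isCoatom {R L : Type*} [CommRing R] [LieRing L]
    [LieAlgebra R L] {J : LieIdeal R L} {M : LieSubalgebra R L} (hM : IsCoatom M) {x : L}
    (hxJ : x ∈ J) (hxM : x ∉ M) : (J : Submodule R L) ⊔ M.toSubmodule = ⊤ := by
  let P : LieSubalgebra R L :=
    { toSubmodule := (J : Submodule R L) ⊔ M.toSubmodule
      lie_mem' := by
        rintro _ _ hu hv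
        obtain ⟨j, hj, m, hm, rfl⟩ := Submodule.mem_sup.1 hu
        obtain ⟨j', hj', m', hm', rfl⟩ := Submodule.mem_sup.1 hv
        rw [lie_add, add_lie, add_lie, add_assoc]
        have hJ : ∀ {u}, u ∈ J → u ∈ (J : Submodule R L) ⊔ M.toSubmodule := Submodule.mem_sup_left
        exact add_mem (hJ (lie_mem_left R L J _ _ hj)) <| add_mem (hJ (lie_mem_right R L J _ _ hj'))
          <| add_mem (hJ (lie_mem_left R L J _ _ hj)) (Submodule.mem_sup_right (M.lie_mem hm hm')) }
  have hMP : M < P := lt_of_le_of_ne (fun m hm => Submodule.mem_sup_right hm)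
    fun h => hxM (h ▸ Submodule.mem_sup_left hxJ)
  exact congrArg LieSubalgebra.toSubmodule (hM.2 P hMP)

section Frattini

variable {F L : Type*} [Field F] [LieRing L] [LieAlgebra F L]

theorem le_frattiniIdeal_iff {I : LieIdeal F L} :
    I ≤ frattiniIdeal F L ↔ ∀ M : LieSubalgebra F L, IsCoatom M → ∀ x ∈ I, x ∈ M := by
  refine ⟨fun hI M hM x hx => ?_, fun hI => le_sSup hI⟩
  have hle : (frattiniIdeal F L).toSubmodule ≤ M.toSubmodule := by
    rw [frattiniIdeal, LieSubmodule.sSup_toSubmodule]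
    exact sSup_le <| by rintro _ ⟨J, hJ, rfl⟩ y hy; exact hJ M hM y hy
  exact hle (hI hx)

theorem LieIdeal.le_frattiniIdeal_of_comap_le {B : Type*} [LieRing B] [LieAlgebra F B]
    [IsCoatomic (LieSubalgebra F B)] (f : B →ₗ⁅F⁆ L) (J : LieIdeal F L)
    (hJf : ∀ x ∈ J, ∃ b, f b = x) (hφ : J.comap f ≤ frattiniIdeal F B) :
    J ≤ frattiniIdeal F L := by
  rw [le_frattiniIdeal_iff]
  intro M hM x hxJ
  by_contra hxM
  have hJM := J.toSubmodule_sup_eq_top_of_isCoatom hM hxJ hxM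
  obtain ⟨M', hM', hle⟩ : ∃ M' : LieSubalgebra F B, IsCoatom M' ∧ M.comap f ≤ M' := by
    refine (eq_top_or_exists_le_coatom (M.comap f)).resolve_left fun htop => hxM ?_
    obtain ⟨b, rfl⟩ := hJf x hxJ
    exact (htop.ge trivial : b ∈ M.comap f)
  refine hM'.1 (eq_top_iff.2 fun b _ => ?_)
  obtain ⟨j, hj, m, hm, hjm⟩ := Submodule.mem_sup.1 (hJM.ge (Submodule.mem_top (x := f b)))
  obtain ⟨c, rfl⟩ := hJf j hj
  have hc : c ∈ M' := le_frattiniIdeal_iff.1 hφ M' hM' c hj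
  have hbc : b - c ∈ M' := hle <| by
    rw [LieSubalgebra.mem_comap, map_sub, ← hjm, add_sub_cancel_left]
    exact hm
  simpa using M'.add_mem hc hbc

end Frattini

section Normalizer

variable {R L : Type*} [CommRing R] [LieRing L] [LieAlgebra R L]

theorem LieSubalgebra.le_normalizer_map_incl (B : LieSubalgebra R L) (I : LieIdeal R B) :
    B ≤ ((I : LieSubalgebra R B).map B.incl).normalizer := by
  intro b hb
  rw [mem_normalizer_iff]
  rintro _ ⟨y, hy, rfl⟩
  exact ⟨⁅⟨b, hb⟩, y⁆, lie_mem_right R B I _ _ hy, rfl⟩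

theorem LieSubalgebra.mem_normalizer_of_ad_mem_adjoin {H : LieSubalgebra R L} {x y : L}
    (hx : x ∈ H.normalizer) (hy : ad R L y ∈ Algebra.adjoin R {ad R L x}) : y ∈ H.normalizer := by
  obtain ⟨p, hp⟩ := Algebra.adjoin_mem_exists_aeval _ _ hy
  rw [mem_normalizer_iff] at hx ⊢
  intro z hz
  rw [← ad_apply R, ← hp]
  exact aeval_apply_smul_mem_of_le_comap hz p (ad R L x) fun w hw => hx w hw

theorem LieSubalgebra.ad_eq_restrict (A : LieSubalgebra R L) (x : A) :
    ad R A x = (ad R L x).restrict fun _ hy => A.lie_mem x.2 hy :=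
  rfl

end Normalizer

section AlmostAlgebraic

variable {F L : Type*} [Field F] [PerfectField F] [LieRing L] [LieAlgebra F L]
  [FiniteDimensional F L]

theorem IsAlmostAlgebraic.exists_ad_eq_add (h : IsAlmostAlgebraic F L) (x : L) :
    ∃ y z : L, ad F L y ∈ Algebra.adjoin F {ad F L x} ∧ ad F L z ∈ Algebra.adjoin F {ad F L x} ∧
      (ad F L y).IsSemisimple ∧ IsNilpotent (ad F L z) ∧ ad F L x = ad F L y + ad F L z := by
  obtain ⟨n, hn, s, hs, hnil, hss, hsum⟩ := (ad F L x).exists_isNilpotent_isSemisimple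
  rw [add_comm] at hsum
  have hsn : Commute s n := Algebra.commute_of_mem_adjoin_singleton_of_commute hn
    (Algebra.commute_of_mem_adjoin_self hs).symm
  obtain ⟨⟨y, rfl⟩, ⟨z, rfl⟩⟩ := h x s n hss hnil hsn hsum
  exact ⟨y, z, hs, hn, hss, hnil, hsum⟩

theorem LieSubalgebra.isAlmostAlgebraic_of_ad_mem_adjoin (hL : IsAlmostAlgebraic F L)
    (A : LieSubalgebra F L) (hA : ∀ x ∈ A, ∀ y, ad F L y ∈ Algebra.adjoin F {ad F L x} → y ∈ A) :
    IsAlmostAlgebraic F A := by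
  intro x s n hs hn hsn hx
  obtain ⟨y, z, hy, hz, hyss, hznil, hyz⟩ := hL.exists_ad_eq_add x
  set y' : A := ⟨y, hA x x.2 y hy⟩
  set z' : A := ⟨z, hA x x.2 z hz⟩
  have hzy : Commute (ad F L z) (ad F L y) := Algebra.commute_of_mem_adjoin_singleton_of_commute
    hy (Algebra.commute_of_mem_adjoin_self hz).symm
  have hx' : ad F A x = ad F A y' + ad F A z' := by
    ext w
    exact congr($hyz w)
  obtain ⟨hnz, hsy⟩ := Module.End.isNilpotent_isSemisimple_unique (n₂ := ad F A z')
    (s₂ := ad F A y') hn hs (by rw [A.ad_eq_restrict]; exact Module.End.isNilpotent.restrict _ hznil)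
    (by rw [A.ad_eq_restrict]; exact hyss.restrict _) hsn.symm
    (by simp only [A.ad_eq_restrict]; exact LinearMap.restrict_commute hzy _ _)
    (by rw [add_comm n, add_comm (ad F A z'), ← hx, hx'])
  exact ⟨⟨y', hsy.symm⟩, ⟨z', hnz.symm⟩⟩

end AlmostAlgebraic

variable (F L : Type*) [Field F] [CharZero F] [LieRing L] [LieAlgebra F L] [FiniteDimensional F L]

theorem elementary_of_almostAlgebraic_subalgebras_phiFree (h : IsAlmostAlgebraic F L)
    (hsub : ∀ B : LieSubalgebra F L, IsAlmostAlgebraic F B → IsPhiFree F B) :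
    IsElementary F L := by
  intro B
  set H : LieSubalgebra F L := (frattiniIdeal F B : LieSubalgebra F B).map B.incl
  have hBH : B ≤ H.normalizer := B.le_normalizer_map_incl _
  obtain ⟨J, hJ⟩ := LieSubalgebra.exists_nested_lieIdeal_ofLe_normalizer H.le_normalizer le_rfl
  have mem_J (a : H.normalizer) : a ∈ J ↔ (a : L) ∈ H := by
    rw [← LieIdeal.mem_toLieSubalgebra, hJ, LieSubalgebra.mem_ofLe]
  let f := LieSubalgebra.inclusion hBH
  have hJB : J.comap f = frattiniIdeal F B := by
    ext b
    rw [LieIdeal.mem_comap, mem_J]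
    exact ⟨fun ⟨c, hc, hcb⟩ => Subtype.ext hcb ▸ hc, fun hb => ⟨b, hb, rfl⟩⟩
  have hJf : ∀ a ∈ J, ∃ b, f b = a := fun a ha => by
    obtain ⟨c, -, hc⟩ := (mem_J a).1 ha
    exact ⟨c, Subtype.ext hc⟩
  have hA : IsPhiFree F H.normalizer := hsub _ <| H.normalizer.isAlmostAlgebraic_of_ad_mem_adjoin h
    fun _ hx _ hy => LieSubalgebra.mem_normalizer_of_ad_mem_adjoin hx hy
  have hJ_bot : J = ⊥ := le_bot_iff.1 (hA ▸ J.le_frattiniIdeal_of_comap_le f hJf hJB.le)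
  rw [← hJB, hJ_bot]
  exact (LieHom.ker_eq_bot f).2 (LieSubalgebra.inclusion_injective hBH)
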